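/- arXiv:1705.05424 — 2 statements merged into one kernel-verified Lean document; each statement's English description precedes it below -/
import Mathlib

section
/- Under the hypotheses of Lemma 1 (D_S > D_U − D_L + 2Υ₁, D₁, D₂ ∈ [D_L, D_U], D₁ + D₂ > D_S + 2Υ₂, 0 < δ < Υ = min{Υ₁, Υ₂}), the closed ball B(θ_T, δ) intersected with the upper half-plane is contained in the intersection of the two rings R(θᵢ, Dᵢ, δ) = {θ in the half-plane : Dᵢ − δ ≤ ‖θ − θᵢ‖ ≤ Dᵢ + δ}, i = 1,2, which in turn is contained in B(θ_T, Φ(δ)) with Φ(δ) = (2D_U + Υ)^{1/2} [(2D_U + Υ)/D_S (Υ/D_S + 1) + 2]^{1/2} √δ. -/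
/-!
Subtracting the two circle equations eliminates the quadratic terms: for centres `(0,0)` and
`(D_S,0)`, `‖θ - θ₁‖² - ‖θ - θ₂‖² = 2 D_S x - D_S²` where `θ = (x, y)`. So a ring width `δ`, which perturbs the
squared radii by `O(δ)`, moves the first coordinate by only `O(δ / D_S)`. The second coordinate is
then pinned down up to sign by `‖θ - θ₁‖`, and in the upper half-plane
`(y - y_T)² ≤ |y² - y_T²| = O(δ)`, which is where the square root in `Φ(δ)` comes from.
-/

open Metric

lemma norm_sub_mem_Icc_of_dist_le {E : Type*} [SeminormedAddCommGroup E] {θ p c : E} {δ : ℝ}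
    (h : dist θ p ≤ δ) : ‖θ - c‖ ∈ Set.Icc (‖p - c‖ - δ) (‖p - c‖ + δ) := by
  have := abs_dist_sub_le θ p c
  simp only [dist_eq_norm] at this h
  constructor <;> linarith [abs_le.mp this]

lemma abs_sq_sub_sq_le {r D δ : ℝ} (hD : 0 ≤ D) (hl : D - δ ≤ r) (hu : r ≤ D + δ) :
    |r ^ 2 - D ^ 2| ≤ δ * (2 * D + δ) := by
  rw [abs_le]
  constructor <;> nlinarith

lemma sq_sub_le_abs_sq_sub_sq {a b : ℝ} (ha : 0 ≤ a) (hb : 0 ≤ b) :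
    (a - b) ^ 2 ≤ |a ^ 2 - b ^ 2| := by
  rw [sq_sub_sq, abs_mul, sq, ← abs_mul_abs_self (a - b), abs_of_nonneg (add_nonneg ha hb)]
  gcongr
  exact abs_sub_le_iff.mpr ⟨by linarith, by linarith⟩

lemma sq_sub_add_sq_sub_le_of_near_two_circles {x y x' y' d ε M : ℝ} (hd : 0 < d)
    (hy : 0 ≤ y) (hy' : 0 ≤ y')
    (h₁ : |(x ^ 2 + y ^ 2) - (x' ^ 2 + y' ^ 2)| ≤ ε)
    (h₂ : |((x - d) ^ 2 + y ^ 2) - ((x' - d) ^ 2 + y' ^ 2)| ≤ ε)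
    (hM : |x + x'| ≤ M) :
    (x - x') ^ 2 + (y - y') ^ 2 ≤ (ε / d) ^ 2 + ε + ε / d * M := by
  have hx : |x - x'| ≤ ε / d := by
    have h : 2 * d * (x - x') =
        ((x ^ 2 + y ^ 2) - (x' ^ 2 + y' ^ 2)) - (((x - d) ^ 2 + y ^ 2) - ((x' - d) ^ 2 + y' ^ 2)) := by
      ring
    have : 2 * d * |x - x'| ≤ 2 * ε := by
      rw [← abs_of_pos (by positivity : 0 < 2 * d), ← abs_mul, h]
      linarith [abs_sub _ _ |>.trans (add_le_add h₁ h₂)]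
    rw [le_div_iff₀ hd]
    linarith
  have hy₂ : |y ^ 2 - y' ^ 2| ≤ ε + ε / d * M := by
    have h : y ^ 2 - y' ^ 2 = ((x ^ 2 + y ^ 2) - (x' ^ 2 + y' ^ 2)) - (x - x') * (x + x') := by ring
    rw [h]
    refine (abs_sub _ _).trans (add_le_add h₁ ?_)
    rw [abs_mul]
    exact mul_le_mul hx hM (abs_nonneg _) ((abs_nonneg _).trans hx)
  calc (x - x') ^ 2 + (y - y') ^ 2 ≤ (ε / d) ^ 2 + |y ^ 2 - y' ^ 2| :=
        add_le_add (sq_le_sq' (abs_le.mp hx).1 (abs_le.mp hx).2) (sq_sub_le_abs_sq_sub_sq hy hy')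
    _ ≤ (ε / d) ^ 2 + ε + ε / d * M := by linarith

lemma dist_sq_le_of_near_two_circles {θ θ' c₁ c₂ : EuclideanSpace ℝ (Fin 2)} {d ε : ℝ}
    (hd : 0 < d) (hc₁0 : c₁ 0 = 0) (hc₁1 : c₁ 1 = 0) (hc₂0 : c₂ 0 = d) (hc₂1 : c₂ 1 = 0)
    (hy : 0 ≤ θ 1) (hy' : 0 ≤ θ' 1)
    (h₁ : |‖θ - c₁‖ ^ 2 - ‖θ' - c₁‖ ^ 2| ≤ ε) (h₂ : |‖θ - c₂‖ ^ 2 - ‖θ' - c₂‖ ^ 2| ≤ ε) :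
    dist θ θ' ^ 2 ≤ (ε / d) ^ 2 + ε + ε / d * (‖θ - c₁‖ + ‖θ' - c₁‖) := by
  have hsq (v w : EuclideanSpace ℝ (Fin 2)) : ‖v - w‖ ^ 2 = (v 0 - w 0) ^ 2 + (v 1 - w 1) ^ 2 := by
    simp [EuclideanSpace.real_norm_sq_eq, Fin.sum_univ_two]
  have hM : |θ 0 + θ' 0| ≤ ‖θ - c₁‖ + ‖θ' - c₁‖ := by
    refine (abs_add_le _ _).trans (add_le_add ?_ ?_)
    · simpa [hc₁0] using PiLp.norm_apply_le (θ - c₁) 0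
    · simpa [hc₁0] using PiLp.norm_apply_le (θ' - c₁) 0
  rw [hsq, hsq, hc₁0, hc₁1] at h₁
  rw [hsq, hsq, hc₂0, hc₂1] at h₂
  rw [dist_eq_norm, hsq]
  simp only [sub_zero] at h₁ h₂
  exact sq_sub_add_sq_sub_le_of_near_two_circles hd hy hy' h₁ h₂ hM

lemma sq_div_add_add_mul_le {d δ Υ M : ℝ} (hδ : 0 ≤ δ) (hδΥ : δ ≤ Υ) (hM : 0 ≤ M) :
    (δ * M / d) ^ 2 + δ * M + δ * M / d * M ≤ M * (M / d * (Υ / d + 1) + 2) * δ := by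
  have h : M * (M / d * (Υ / d + 1) + 2) * δ - ((δ * M / d) ^ 2 + δ * M + δ * M / d * M)
      = (Υ - δ) * δ * (M / d) ^ 2 + δ * M := by
    ring
  have : 0 ≤ (Υ - δ) * δ * (M / d) ^ 2 := by
    have := sub_nonneg.mpr hδΥ
    positivity
  linarith [mul_nonneg hδ hM]

theorem ring_intersection_sandwich_general
    (DS DU DL Υ₁ Υ₂ δ D₁ D₂ : ℝ)
    (θ₁ θ₂ θT : EuclideanSpace ℝ (Fin 2))
    (hθ₁0 : θ₁ 0 = 0) (hθ₁1 : θ₁ 1 = 0)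
    (hθ₂0 : θ₂ 0 = DS) (hθ₂1 : θ₂ 1 = 0)
    (hDS : 0 < DS)
    (hyT : 0 < θT 1)
    (hD₁ : ‖θT - θ₁‖ = D₁) (hD₂ : ‖θT - θ₂‖ = D₂)
    (hD₁m : D₁ ∈ Set.Icc DL DU) (hD₂m : D₂ ∈ Set.Icc DL DU)
    (hδ : δ < min Υ₁ Υ₂) :
    (Metric.closedBall θT δ ∩ {θ : EuclideanSpace ℝ (Fin 2) | 0 < θ 1}) ⊆
        ({θ : EuclideanSpace ℝ (Fin 2) | 0 < θ 1 ∧ D₁ - δ ≤ ‖θ - θ₁‖ ∧ ‖θ - θ₁‖ ≤ D₁ + δ} ∩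
          {θ : EuclideanSpace ℝ (Fin 2) | 0 < θ 1 ∧ D₂ - δ ≤ ‖θ - θ₂‖ ∧ ‖θ - θ₂‖ ≤ D₂ + δ}) ∧
      ({θ : EuclideanSpace ℝ (Fin 2) | 0 < θ 1 ∧ D₁ - δ ≤ ‖θ - θ₁‖ ∧ ‖θ - θ₁‖ ≤ D₁ + δ} ∩
          {θ : EuclideanSpace ℝ (Fin 2) | 0 < θ 1 ∧ D₂ - δ ≤ ‖θ - θ₂‖ ∧ ‖θ - θ₂‖ ≤ D₂ + δ}) ⊆
        Metric.closedBall θT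
          (Real.sqrt (2 * DU + min Υ₁ Υ₂) *
            Real.sqrt ((2 * DU + min Υ₁ Υ₂) / DS * (min Υ₁ Υ₂ / DS + 1) + 2) *
            Real.sqrt δ) := by
  refine ⟨fun θ ⟨hθ, hy⟩ => ?_, fun θ ⟨⟨hy, h₁l, h₁u⟩, _, h₂l, h₂u⟩ => ?_⟩
  · rw [← hD₁, ← hD₂]
    exact ⟨⟨hy, norm_sub_mem_Icc_of_dist_le hθ⟩, hy, norm_sub_mem_Icc_of_dist_le hθ⟩
  set Υ := min Υ₁ Υ₂
  set M := 2 * DU + Υ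
  have hδ₀ : 0 ≤ δ := by linarith
  have hD₁₀ : 0 ≤ D₁ := hD₁ ▸ norm_nonneg _
  have hD₂₀ : 0 ≤ D₂ := hD₂ ▸ norm_nonneg _
  have hΥ : δ ≤ Υ := hδ.le
  have hM : 0 ≤ M := by linarith [hD₁m.2]
  have hR : ‖θ - θ₁‖ + ‖θT - θ₁‖ ≤ M := by linarith [hD₁m.2]
  have sq_near (D : ℝ) (hD : D ∈ Set.Icc DL DU) (hD₀ : 0 ≤ D) {r : ℝ} (hl : D - δ ≤ r)
      (hu : r ≤ D + δ) : |r ^ 2 - D ^ 2| ≤ δ * M :=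
    (abs_sq_sub_sq_le hD₀ hl hu).trans (by gcongr; linarith [hD.2])
  have hdist := dist_sq_le_of_near_two_circles hDS hθ₁0 hθ₁1 hθ₂0 hθ₂1 hy.le hyT.le
    (hD₁ ▸ sq_near D₁ hD₁m hD₁₀ h₁l h₁u) (hD₂ ▸ sq_near D₂ hD₂m hD₂₀ h₂l h₂u)
  clear_value Υ M
  have hΥ₀ : 0 ≤ Υ := hδ₀.trans hΥ
  rw [mem_closedBall, ← Real.sqrt_mul hM, ← Real.sqrt_mul (by positivity),
    Real.le_sqrt dist_nonneg (by positivity)]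
  calc dist θ θT ^ 2 ≤ (δ * M / DS) ^ 2 + δ * M + δ * M / DS * M := hdist.trans (by gcongr)
    _ ≤ M * (M / DS * (Υ / DS + 1) + 2) * δ := sq_div_add_add_mul_le hδ₀ hΥ hM

theorem ring_intersection_sandwich
    (DS DU DL Υ₁ Υ₂ δ D₁ D₂ : ℝ)
    (θ₁ θ₂ θT : EuclideanSpace ℝ (Fin 2))
    (hθ₁0 : θ₁ 0 = 0) (hθ₁1 : θ₁ 1 = 0)
    (hθ₂0 : θ₂ 0 = DS) (hθ₂1 : θ₂ 1 = 0)
    (hDS : 0 < DS) (hΥ₁ : 0 < Υ₁) (hΥ₂ : 0 < Υ₂)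
    (hyT : 0 < θT 1)
    (hD₁ : ‖θT - θ₁‖ = D₁) (hD₂ : ‖θT - θ₂‖ = D₂)
    (hD₁m : D₁ ∈ Set.Icc DL DU) (hD₂m : D₂ ∈ Set.Icc DL DU)
    (hsep : DS > DU - DL + 2 * Υ₁)
    (hsum : D₁ + D₂ > DS + 2 * Υ₂)
    (hδpos : 0 < δ) (hδ : δ < min Υ₁ Υ₂) :
    (Metric.closedBall θT δ ∩ {θ : EuclideanSpace ℝ (Fin 2) | 0 < θ 1}) ⊆
        ({θ : EuclideanSpace ℝ (Fin 2) | 0 < θ 1 ∧ D₁ - δ ≤ ‖θ - θ₁‖ ∧ ‖θ - θ₁‖ ≤ D₁ + δ} ∩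
          {θ : EuclideanSpace ℝ (Fin 2) | 0 < θ 1 ∧ D₂ - δ ≤ ‖θ - θ₂‖ ∧ ‖θ - θ₂‖ ≤ D₂ + δ}) ∧
      ({θ : EuclideanSpace ℝ (Fin 2) | 0 < θ 1 ∧ D₁ - δ ≤ ‖θ - θ₁‖ ∧ ‖θ - θ₁‖ ≤ D₁ + δ} ∩
          {θ : EuclideanSpace ℝ (Fin 2) | 0 < θ 1 ∧ D₂ - δ ≤ ‖θ - θ₂‖ ∧ ‖θ - θ₂‖ ≤ D₂ + δ}) ⊆
        Metric.closedBall θT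
          (Real.sqrt (2 * DU + min Υ₁ Υ₂) *
            Real.sqrt ((2 * DU + min Υ₁ Υ₂) / DS * (min Υ₁ Υ₂ / DS + 1) + 2) *
            Real.sqrt δ) :=
  ring_intersection_sandwich_general DS DU DL Υ₁ Υ₂ δ D₁ D₂ θ₁ θ₂ θT hθ₁0 hθ₁1 hθ₂0 hθ₂1 hDS hyT hD₁
    hD₂ hD₁m hD₂m hδ
end

section
/- Suppose 0 < δ < min{Υ, C⁻² λ²} where C = (2D_U + Υ)^{1/2} [ (6D_U + 3Υ)/(2D_S) (Υ/D_S + 1) + 3 ]^{1/2} + (1/2)Υ^{1/2} and λ > 0. Then Φ(3δ/2) + δ/2 < λ, with Φ as in Lemma 1. -/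
theorem Phi_below_lambda (DU DS Υ δ lam : ℝ)
    (hDU : 0 < DU) (hDS : 0 < DS) (hΥ : 0 < Υ) (hlam : 0 < lam)
    (hδpos : 0 < δ)
    (hδ : δ < min Υ
      (lam ^ 2 / (Real.sqrt (2 * DU + Υ) *
          Real.sqrt ((6 * DU + 3 * Υ) / (2 * DS) * (Υ / DS + 1) + 3) +
        (1 / 2) * Real.sqrt Υ) ^ 2)) :
    Real.sqrt (2 * DU + Υ) *
        Real.sqrt ((2 * DU + Υ) / DS * (Υ / DS + 1) + 2) *
        Real.sqrt (3 * δ / 2) + δ / 2 < lam := by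
  set A : ℝ := (2 * DU + Υ) / DS * (Υ / DS + 1) + 2 with hAdef
  set C : ℝ := Real.sqrt (2 * DU + Υ) *
      Real.sqrt ((6 * DU + 3 * Υ) / (2 * DS) * (Υ / DS + 1) + 3) +
      (1 / 2) * Real.sqrt Υ with hCdef
  have hδΥ : δ < Υ := lt_of_lt_of_le hδ (min_le_left _ _)
  have hδC : δ < lam ^ 2 / C ^ 2 := lt_of_lt_of_le hδ (min_le_right _ _)
  have hA : (0:ℝ) ≤ A := by positivity
  have hCpos : 0 < C := by
    have h1 : 0 < Real.sqrt Υ := Real.sqrt_pos.2 hΥ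
    have h2 : 0 ≤ Real.sqrt (2 * DU + Υ) := Real.sqrt_nonneg _
    have h3 : 0 ≤ Real.sqrt ((6 * DU + 3 * Υ) / (2 * DS) * (Υ / DS + 1) + 3) :=
      Real.sqrt_nonneg _
    rw [hCdef]; positivity
  -- C * √δ < lam
  have hCs : C * Real.sqrt δ < lam := by
    have hC2 : (0:ℝ) < C ^ 2 := by positivity
    have h1 : C ^ 2 * δ < lam ^ 2 := by
      have := (lt_div_iff₀ hC2).mp hδC
      linarith
    calc C * Real.sqrt δ = Real.sqrt (C ^ 2 * δ) := by
          rw [Real.sqrt_mul (sq_nonneg C), Real.sqrt_sq hCpos.le]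
      _ < Real.sqrt (lam ^ 2) := Real.sqrt_lt_sqrt (by positivity) h1
      _ = lam := Real.sqrt_sq hlam.le
  have e1 : Real.sqrt (3 * δ / 2) = Real.sqrt (3 / 2) * Real.sqrt δ := by
    rw [show (3:ℝ) * δ / 2 = (3 / 2) * δ by ring,
      Real.sqrt_mul (by norm_num)]
  have e2 : Real.sqrt ((6 * DU + 3 * Υ) / (2 * DS) * (Υ / DS + 1) + 3)
      = Real.sqrt (3 / 2) * Real.sqrt A := by
    rw [show (6 * DU + 3 * Υ) / (2 * DS) * (Υ / DS + 1) + 3 = (3 / 2) * A by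
        rw [hAdef]; field_simp; ring,
      Real.sqrt_mul (by norm_num)]
  have key : Real.sqrt (2 * DU + Υ) * Real.sqrt A * (Real.sqrt (3 / 2) * Real.sqrt δ)
      + (1 / 2) * Real.sqrt Υ * Real.sqrt δ = C * Real.sqrt δ := by
    rw [hCdef, e2]; ring
  have hδ2 : δ / 2 ≤ (1 / 2) * Real.sqrt Υ * Real.sqrt δ := by
    have h1 : Real.sqrt δ * Real.sqrt δ = δ := Real.mul_self_sqrt hδpos.le
    have h2 : Real.sqrt δ ≤ Real.sqrt Υ := Real.sqrt_le_sqrt hδΥ.le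
    nlinarith [Real.sqrt_nonneg δ]
  rw [e1]
  calc Real.sqrt (2 * DU + Υ) * Real.sqrt A * (Real.sqrt (3 / 2) * Real.sqrt δ) + δ / 2
      ≤ Real.sqrt (2 * DU + Υ) * Real.sqrt A * (Real.sqrt (3 / 2) * Real.sqrt δ)
        + (1 / 2) * Real.sqrt Υ * Real.sqrt δ := by linarith
    _ = C * Real.sqrt δ := key
    _ < lam := hCs
end
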